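/- Let $A \in \mathrm{Tab}_\Bbbk(\pi)$ be column-connected with entries $a_{i,1}, \ldots, a_{i,p_i}$ in the $i$-th row. Define the action of $D_i^{(r)}$ on the one-dimensional module $\widetilde{\Bbbk}_A$ by the scalar $(-1)^{r|i|} e_r\big(a_{i,1} + (-1)^{|i|}\hat{\mathrm{row}}(i), \ldots, a_{i,p_i} + (-1)^{|i|}\hat{\mathrm{row}}(i)\big)$. Then given arbitrary scalars $a_i^{(r)} \in \Bbbk$ for $1 \le i \le m+n$, $1 \le r \le p_i - p_{i-1}$, there exists a column-connected tableau $A$ such that $D_i^{(r)}$ acts by $a_i^{(r)}$ for all such $i, r$. -/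

import Mathlib

/-!
Work with the rows `b_{i,·}`, where `b_{i,j} = (-1)^{|i|} a_{i,j} + roŵ(i)`; the signs
`(-1)^{r|i|}` and the shifts by `roŵ(i)` in the action of `D_i^{(r)}` cancel, so it acts by
`e_r(b_{i,·})`. The overlap conditions say that row `i` contains row `i - 1` as a block starting
after `s_{i,i-1}` entries, which leaves `q = p_i - p_{i-1}` entries free. By Vieta, prescribing
`e_1, …, e_q` of row `i` means prescribing the `q` coefficients just below the top of
`∏_j (X - b_{i,j}) = P * Q`, where `P` is the product over row `i - 1` and `Q` is monic of
degree `q`. Such a `Q` is the quotient by `P` of any monic polynomial with those coefficients,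
and over an algebraically closed field its roots are the free entries. Induction on `i` builds
the rows.
-/

open Finset

/-- The `r`-th elementary symmetric polynomial of `p` values. -/
noncomputable def esym {k : Type*} [CommRing k] (p r : ℕ) (b : Fin p → k) : k :=
  ∑ s ∈ Finset.powersetCard r (Finset.univ : Finset (Fin p)), ∏ i ∈ s, b i

namespace Polynomial

variable {R : Type*} [CommRing R]

theorem Monic.coeff_mul_divByMonic {P : R[X]} (hP : P.Monic) (T : R[X]) {j : ℕ}
    (hj : P.natDegree ≤ j) : (P * (T /ₘ P)).coeff j = T.coeff j := by
  nontriviality R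
  have hmod : (T %ₘ P).coeff j = 0 := coeff_eq_zero_of_degree_lt <|
    (degree_modByMonic_lt T hP).trans_le (degree_le_natDegree.trans (by exact_mod_cast hj))
  conv_rhs => rw [← modByMonic_add_div T P]
  rw [coeff_add, hmod, zero_add]

theorem exists_monic_natDegree_coeff_eq [Nontrivial R] (N : ℕ) (b : ℕ → R) :
    ∃ T : R[X], T.Monic ∧ T.natDegree = N ∧ ∀ j < N, T.coeff j = b j := by
  have hlow : (∑ i : Fin N, C (b i) * X ^ (i : ℕ)).degree < (N : WithBot ℕ) :=
    degree_sum_fin_lt _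
  refine ⟨X ^ N + ∑ i : Fin N, C (b i) * X ^ (i : ℕ), monic_X_pow_add hlow, ?_, ?_⟩
  · exact natDegree_eq_of_degree_eq_some <| by
      rw [degree_add_eq_left_of_degree_lt (by rwa [degree_X_pow]), degree_X_pow]
  · intro j hj
    rw [coeff_add, coeff_X_pow, if_neg hj.ne, zero_add, finsetSum_coeff,
      Finset.sum_eq_single ⟨j, hj⟩]
    · simp
    · intro i _ hi
      rw [coeff_C_mul_X_pow, if_neg (fun h => hi (Fin.ext h.symm))]
    · simp

theorem Monic.exists_monic_mul_coeff_eq [Nontrivial R] {P : R[X]} (hP : P.Monic) (q : ℕ)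
    (c : ℕ → R) : ∃ Q : R[X], Q.Monic ∧ Q.natDegree = q ∧
      ∀ j, P.natDegree ≤ j → j < P.natDegree + q → (P * Q).coeff j = c j := by
  obtain ⟨T, hTm, hTdeg, hTcoeff⟩ := exists_monic_natDegree_coeff_eq (P.natDegree + q) c
  have hPT : P.degree ≤ T.degree := by
    rw [degree_eq_natDegree hP.ne_zero, degree_eq_natDegree hTm.ne_zero, hTdeg]
    exact_mod_cast Nat.le_add_right _ _
  refine ⟨T /ₘ P, ?_, ?_, fun j hj hjq => ?_⟩
  · rw [Monic, leadingCoeff_divByMonic_of_monic hP hPT, hTm.leadingCoeff]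
  · rw [natDegree_divByMonic T hP, hTdeg, Nat.add_sub_cancel_left]
  · rw [hP.coeff_mul_divByMonic T hj, hTcoeff j hjq]

end Polynomial

open Polynomial in
theorem Multiset.exists_card_eq_esymm_add_eq {k : Type*} [Field k] [IsAlgClosed k]
    (F : Multiset k) (q : ℕ) (c : ℕ → k) :
    ∃ g : Multiset k, card g = q ∧ ∀ r, 1 ≤ r → r ≤ q → (F + g).esymm r = c r := by
  set N := card F + q
  set P : k[X] := (F.map fun t => X - C t).prod
  have hP : P.Monic := monic_multiset_prod_of_monic _ _ fun t _ => monic_X_sub_C t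
  have hPdeg : P.natDegree = card F := natDegree_multiset_prod_X_sub_C_eq_card F
  -- Vieta: the coefficient of `X ^ (N - r)` in a product of `N` factors `X - t` is `(-1)^r e_r`
  obtain ⟨Q, hQm, hQdeg, hQcoeff⟩ :=
    hP.exists_monic_mul_coeff_eq q fun j => (-1) ^ (N - j) * c (N - j)
  have hQprod : (Q.roots.map fun t => X - C t).prod = Q :=
    ((IsAlgClosed.splits Q).eq_prod_roots_of_monic hQm).symm
  have hcard : card Q.roots = q := by rw [IsAlgClosed.card_roots_eq_natDegree, hQdeg]
  refine ⟨Q.roots, hcard, fun r hr hrq => ?_⟩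
  have hcardN : card (F + Q.roots) = N := by rw [card_add, hcard]
  have hvieta := prod_X_sub_C_coeff (F + Q.roots) (k := N - r) (by omega)
  rw [map_add, prod_add, hQprod, hQcoeff _ (by omega) (by omega), hcardN,
    Nat.sub_sub_self (by omega)] at hvieta
  exact (mul_right_injective₀ (pow_ne_zero r (neg_ne_zero.mpr one_ne_zero)) hvieta).symm

def List.insertBlock {α : Type*} (s : ℕ) (l g : List α) : List α :=
  g.take s ++ l ++ g.drop s

namespace List

variable {α : Type*} (s : ℕ) (l g : List α)

theorem length_insertBlock : (insertBlock s l g).length = g.length + l.length := by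
  simp only [insertBlock, length_append, length_take, length_drop]
  omega

theorem insertBlock_perm : insertBlock s l g ~ l ++ g :=
  calc g.take s ++ l ++ g.drop s ~ l ++ g.take s ++ g.drop s := perm_append_comm.append_right _
    _ = l ++ g := by rw [append_assoc, take_append_drop]

theorem getElem?_insertBlock {s : ℕ} {l g : List α} (hs : s ≤ g.length) {r : ℕ}
    (hr : r < l.length) : (insertBlock s l g)[s + r]? = l[r]? := by
  have htake : (g.take s).length = s := length_take_of_le hs
  rw [insertBlock, getElem?_append_left (by simp [htake, hr]), getElem?_append_right (by omega),
    htake, Nat.add_sub_cancel_left]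

end List

theorem esym_const_mul {k : Type*} [CommRing k] (P r : ℕ) (a : k) (b : Fin P → k) :
    esym P r (fun j => a * b j) = a ^ r * esym P r b := by
  rw [esym, esym, Finset.mul_sum]
  refine Finset.sum_congr rfl fun t ht => ?_
  rw [Finset.prod_mul_distrib, Finset.prod_const, Finset.mem_powersetCard_univ.mp ht]

theorem esym_getD_eq_esymm {k : Type*} [CommRing k] {P : ℕ} (l : List k) (hl : l.length = P)
    (r : ℕ) : esym P r (fun j => l.getD j 0) = (l : Multiset k).esymm r := by
  subst hl
  rw [esym, ← Finset.esymm_map_val, Fin.univ_val_map]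
  congr 2
  calc List.ofFn (fun j : Fin l.length => l.getD j 0)
      = List.ofFn (fun j : Fin l.length => l[(j : ℕ)]) := by
        congr 1; funext j; exact List.getD_eq_getElem l 0 j.2
    _ = l := List.ofFn_getElem

theorem exists_rows_esymm {k : Type*} [Field k] [IsAlgClosed k] (p s : ℕ → ℕ)
    (hs : ∀ i, s i + p i ≤ p (i + 1)) (c : ℕ → ℕ → k) :
    ∃ L : ℕ → List k, (∀ i, (L i).length = p i) ∧
      (∀ i r, r < p i → (L (i + 1))[s i + r]? = (L i)[r]?) ∧
      ∀ i r, 1 ≤ r → r ≤ p (i + 1) - p i → (L (i + 1) : Multiset k).esymm r = c i r := by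
  choose g hg_card hg_esymm using fun (F : Multiset k) i =>
    Multiset.exists_card_eq_esymm_add_eq F (p (i + 1) - p i) (c i)
  let L : ℕ → List k := fun i =>
    Nat.rec (List.replicate (p 0) 0) (fun i l => List.insertBlock (s i) l (g l i).toList) i
  have hL : ∀ i, L (i + 1) =
      List.insertBlock (s i) (L i) (g (Multiset.ofList (L i)) i).toList := fun _ => by rfl
  have hg_length : ∀ i, (g (Multiset.ofList (L i)) i).toList.length = p (i + 1) - p i :=
    fun i => by rw [Multiset.length_toList, hg_card]
  have hlen : ∀ i, (L i).length = p i := by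
    intro i
    induction i with
    | zero => exact List.length_replicate
    | succ i ih =>
      rw [hL, List.length_insertBlock, hg_length, ih]
      have := hs i
      omega
  refine ⟨L, hlen, fun i r hr => ?_, fun i r hr hrq => ?_⟩
  · rw [hL]
    exact List.getElem?_insertBlock (by rw [hg_length]; have := hs i; omega) (by rwa [hlen])
  · rw [hL, Multiset.coe_eq_coe.mpr (List.insertBlock_perm _ _ _), ← Multiset.coe_add,
      Multiset.coe_toList]
    exact hg_esymm _ i r hr hrq

theorem stmt17_general {k : Type*} [Field k] [IsAlgClosed k]
    (m n : ℕ) (p : ℕ → ℕ)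
    (par : ℕ → ℕ)
    (rowhat : ℕ → ℤ) (s : ℕ → ℕ → ℕ)
    (hs : ∀ i, 1 ≤ i → s i (i - 1) + p (i - 1) ≤ p i)
    (aT : ℕ → ℕ → k) :
    ∃ A : ℕ → ℕ → k,
      -- `A` is (row-equivalent to) a column-connected tableau: overlap conditions
      (∀ i r, 2 ≤ i → i ≤ m + n → 1 ≤ r → r ≤ p (i - 1) →
        ((-1 : k) ^ par i) * A i (s i (i - 1) + r) + (rowhat i : k) =
          ((-1 : k) ^ par (i - 1)) * A (i - 1) r + (rowhat (i - 1) : k)) ∧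
      -- each `D_i^{(r)}` acts by the prescribed scalar `aT i r`
      (∀ i r, 1 ≤ i → i ≤ m + n → 1 ≤ r → r ≤ p i - p (i - 1) →
        ((-1 : k) ^ (r * par i)) *
            esym (p i) r (fun j => A i (j.1 + 1) + ((-1 : k) ^ par i) * (rowhat i : k)) =
          aT i r) := by
  -- `L i` is the row `b_{i,·}` of the paper; `a_{i,j} = (-1)^{|i|} (b_{i,j} - roŵ(i))`
  obtain ⟨L, hlen, hblock, hesymm⟩ := exists_rows_esymm p (fun i => s (i + 1) i)
    (fun i => hs (i + 1) (Nat.le_add_left 1 i)) (fun i => aT (i + 1))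
  have hsign : ∀ i, ((-1 : k) ^ par i) ^ 2 = 1 := fun i => by
    rw [← pow_mul, pow_mul', neg_one_sq, one_pow]
  refine ⟨fun i j => (-1) ^ par i * ((L i).getD (j - 1) 0 - rowhat i), ?_, ?_⟩
  · rintro i r hi - hr hrp
    obtain ⟨i, rfl⟩ : ∃ i', i = i' + 1 := ⟨i - 1, by omega⟩
    have hb : (L (i + 1)).getD (s (i + 1) i + r - 1) 0 = (L i).getD (r - 1) 0 := by
      rw [List.getD_eq_getElem?_getD, List.getD_eq_getElem?_getD, Nat.add_sub_assoc hr,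
        hblock i (r - 1) (by rw [Nat.add_sub_cancel] at hrp; omega)]
    simp only [Nat.add_sub_cancel, hb]
    linear_combination ((L i).getD (r - 1) 0 - rowhat (i + 1)) * hsign (i + 1)
      - ((L i).getD (r - 1) 0 - rowhat i) * hsign i
  · rintro i r hi - hr hrq
    obtain ⟨i, rfl⟩ : ∃ i', i = i' + 1 := ⟨i - 1, by omega⟩
    simp only [Nat.add_sub_cancel, mul_sub, sub_add_cancel]
    rw [esym_const_mul, esym_getD_eq_esymm _ (hlen _), ← mul_assoc, pow_mul', ← mul_pow,
      ← sq, hsign, one_pow, one_mul]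
    exact hesymm i r hr (by simpa using hrq)

/-- Step (2) of the proof of Theorem 4.3 of the paper: given arbitrary target
scalars `aT i r` (`1 ≤ i ≤ m+n`, `1 ≤ r ≤ p i - p (i-1)`), there exists a
column-connected tableau `A` — column-connectedness being expressed (via
Lemma 4.2) by the overlap conditions `b_{i, s_{i,i-1}+r} = b_{i-1,r}` for
`b_{i,j} = (-1)^{|i|} a_{i,j} + roŵ(i)` — such that each generator `D_i^{(r)}`
acts on `𝕜̃_A` by the scalar
`(-1)^{r|i|} e_r(a_{i,1} + (-1)^{|i|} roŵ(i), …, a_{i,p_i} + (-1)^{|i|} roŵ(i)) = aT i r`. -/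
theorem stmt17 {k : Type*} [Field k] [IsAlgClosed k] [CharZero k]
    (m n : ℕ) (p : ℕ → ℕ) (hp0 : p 0 = 0) (hmono : Monotone p)
    (par : ℕ → ℕ) (hpar : ∀ i, par i ≤ 1)
    (rowhat : ℕ → ℤ) (s : ℕ → ℕ → ℕ)
    (hs : ∀ i, 1 ≤ i → s i (i - 1) + p (i - 1) ≤ p i)
    (aT : ℕ → ℕ → k) :
    ∃ A : ℕ → ℕ → k,
      -- `A` is (row-equivalent to) a column-connected tableau: overlap conditions
      (∀ i r, 2 ≤ i → i ≤ m + n → 1 ≤ r → r ≤ p (i - 1) →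
        ((-1 : k) ^ par i) * A i (s i (i - 1) + r) + (rowhat i : k) =
          ((-1 : k) ^ par (i - 1)) * A (i - 1) r + (rowhat (i - 1) : k)) ∧
      -- each `D_i^{(r)}` acts by the prescribed scalar `aT i r`
      (∀ i r, 1 ≤ i → i ≤ m + n → 1 ≤ r → r ≤ p i - p (i - 1) →
        ((-1 : k) ^ (r * par i)) *
            esym (p i) r (fun j => A i (j.1 + 1) + ((-1 : k) ^ par i) * (rowhat i : k)) =
          aT i r) :=
  stmt17_general m n p par rowhat s hs aT
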